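/- arXiv:2511.14626 — 9 statements merged into one kernel-verified Lean document; each statement's English description precedes it below -/
import Mathlib

section
/- Let c > 0 and let α : ℝ → ℝ be continuous on [0, c], strictly increasing on [0, c], satisfy α(0) = 0, and be strictly concave on [0, c]. Then for every ε ∈ (0, c), the crossing time satisfies T_α(ε, c) = ∫_ε^c (1/α(y)) dy < (c/α(c))·ln(c/ε); equivalently, the windowed nominal rate satisfies σ_α(ε, c) > α(c)/c, i.e., the endpoint-relaxation ratio r_α(ε, c) = α(c)/(σ_α(ε, c)·c) is strictly less than 1. -/
/-! Strict concavity with `α 0 = 0` puts `α` strictly above its chord `y ↦ (α c / c) y` on `(0, c)`,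
so `1 / α y < (c / α c) / y` there; integrating over `[ε, c]` gives the bound on the crossing
time, and dividing `log (c / ε)` by it gives the bound on the rate. -/

open intervalIntegral Real

/-- Crossing time of the comparison ODE on the window `[ε, c]`. -/
noncomputable def Tcross (α : ℝ → ℝ) (ε c : ℝ) : ℝ := ∫ y in ε..c, 1 / α y

/-- Windowed nominal exponential decay rate on `[ε, c]`. -/
noncomputable def sigmaNom (α : ℝ → ℝ) (ε c : ℝ) : ℝ :=
  Real.log (c / ε) / Tcross α ε c

open Set

theorem StrictConcaveOn.div_mul_lt_of_map_zero {f : ℝ → ℝ} {c y : ℝ}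
    (hf : StrictConcaveOn ℝ (Icc 0 c) f) (h0 : f 0 = 0) (hy : y ∈ Ioo 0 c) :
    f c / c * y < f y := by
  obtain ⟨hy0, hyc⟩ := hy
  have hc : 0 < c := hy0.trans hyc
  have ht : 0 < y / c := div_pos hy0 hc
  have ht1 : 0 < 1 - y / c := sub_pos.2 ((div_lt_one hc).2 hyc)
  have key := hf.2 (left_mem_Icc.2 hc.le) (right_mem_Icc.2 hc.le) hc.ne ht1 ht (by ring)
  have hcomb : (1 - y / c) • (0 : ℝ) + (y / c) • c = y := by
    simp only [smul_eq_mul, mul_zero, zero_add, div_mul_cancel₀ y hc.ne']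
  rw [hcomb, h0, smul_eq_mul, smul_eq_mul, mul_zero, zero_add] at key
  linarith [div_mul_comm (f c) c y]

theorem Tcross_pos {α : ℝ → ℝ} {ε c : ℝ} (hεc : ε < c) (hcont : ContinuousOn α (Icc ε c))
    (hpos : ∀ y ∈ Icc ε c, 0 < α y) : 0 < Tcross α ε c := by
  have hcont' : ContinuousOn (fun y => 1 / α y) (Icc ε c) :=
    continuousOn_const.div hcont fun y hy => (hpos y hy).ne'
  exact intervalIntegral_pos_of_pos_on (hcont'.intervalIntegrable_of_Icc hεc.le)
    (fun y hy => one_div_pos.2 (hpos y (Ioo_subset_Icc_self hy))) hεc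

theorem Tcross_lt_of_mul_le {α : ℝ → ℝ} {k ε c : ℝ} (hε : 0 < ε) (hεc : ε < c) (hk : 0 < k)
    (hcont : ContinuousOn α (Icc ε c)) (hle : ∀ y ∈ Icc ε c, k * y ≤ α y)
    (hlt : ∃ y ∈ Icc ε c, k * y < α y) :
    Tcross α ε c < k⁻¹ * log (c / ε) := by
  have hline : ∀ y ∈ Icc ε c, 0 < k * y := fun y hy => mul_pos hk (hε.trans_le hy.1)
  have hlhs : ContinuousOn (fun y => 1 / α y) (Icc ε c) :=
    continuousOn_const.div hcont fun y hy => ((hline y hy).trans_le (hle y hy)).ne'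
  have hrhs : ContinuousOn (fun y => k⁻¹ * (1 / y)) (Icc ε c) :=
    continuousOn_const.mul <| continuousOn_const.div continuousOn_id
      fun y hy => (hε.trans_le hy.1).ne'
  have hrecip : ∀ y ∈ Icc ε c,
      1 / α y ≤ k⁻¹ * (1 / y) ∧ (k * y < α y → 1 / α y < k⁻¹ * (1 / y)) := fun y hy => by
      rw [← one_div, div_mul_div_comm, one_mul]
      exact ⟨one_div_le_one_div_of_le (hline y hy) (hle y hy),
        one_div_lt_one_div_of_lt (hline y hy)⟩
  calc Tcross α ε c < ∫ y in ε..c, k⁻¹ * (1 / y) :=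
        integral_lt_integral_of_continuousOn_of_le_of_exists_lt hεc hlhs hrhs
          (fun y hy => (hrecip y (Ioc_subset_Icc_self hy)).1)
          (let ⟨y, hy, hlty⟩ := hlt; ⟨y, hy, (hrecip y hy).2 hlty⟩)
    _ = k⁻¹ * log (c / ε) := by
        rw [integral_const_mul, integral_one_div_of_pos hε (hε.trans hεc)]

theorem lt_sigmaNom_of_Tcross_lt {α : ℝ → ℝ} {k ε c : ℝ} (hk : 0 < k)
    (hT : 0 < Tcross α ε c) (hlt : Tcross α ε c < k⁻¹ * log (c / ε)) :
    k < sigmaNom α ε c := by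
  rw [sigmaNom, lt_div_iff₀ hT]
  calc k * Tcross α ε c < k * (k⁻¹ * log (c / ε)) := mul_lt_mul_of_pos_left hlt hk
    _ = log (c / ε) := by rw [mul_inv_cancel_left₀ hk.ne']

/-- A strictly concave comparison function beats its chord: the crossing time is
strictly smaller than the linear one with the same endpoint, equivalently the
windowed nominal rate strictly exceeds `α(c)/c` (endpoint-relaxation ratio `< 1`). -/
theorem stmt_4 (α : ℝ → ℝ) (c : ℝ) (hc : 0 < c)
    (hcont : ContinuousOn α (Set.Icc 0 c))
    (hmono : StrictMonoOn α (Set.Icc 0 c))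
    (h0 : α 0 = 0)
    (hcave : StrictConcaveOn ℝ (Set.Icc 0 c) α) :
    ∀ ε ∈ Set.Ioo 0 c,
      Tcross α ε c < (c / α c) * Real.log (c / ε) ∧
      α c / c < sigmaNom α ε c := by
  rintro ε ⟨hε, hεc⟩
  have hαc : 0 < α c := h0 ▸ hmono (left_mem_Icc.2 hc.le) (right_mem_Icc.2 hc.le) hc
  have hk : 0 < α c / c := div_pos hαc hc
  have hchord : ∀ y ∈ Ico ε c, α c / c * y < α y := fun y hy =>
    hcave.div_mul_lt_of_map_zero h0 ⟨hε.trans_le hy.1, hy.2⟩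
  have hle : ∀ y ∈ Icc ε c, α c / c * y ≤ α y := fun y hy => by
    rcases hy.2.lt_or_eq with hyc | rfl
    · exact (hchord y ⟨hy.1, hyc⟩).le
    · rw [div_mul_cancel₀ _ hc.ne']
  have hcont' : ContinuousOn α (Icc ε c) := hcont.mono (Icc_subset_Icc hε.le le_rfl)
  have hT := Tcross_lt_of_mul_le hε hεc hk hcont' hle
    ⟨ε, left_mem_Icc.2 hεc.le, hchord ε (left_mem_Ico.2 hεc)⟩
  have hTpos : 0 < Tcross α ε c := Tcross_pos hεc hcont' fun y hy =>
    (mul_pos hk (hε.trans_le hy.1)).trans_le (hle y hy)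
  exact ⟨by rwa [inv_div] at hT, lt_sigmaNom_of_Tcross_lt hk hTpos hT⟩
end

section
/- Let σ > 0, c > 0, and let α : ℝ → ℝ be continuous on [0, c], strictly increasing on [0, c], satisfy α(0) = 0, be strictly convex on [0, c], and satisfy the endpoint bound α(c) ≤ σ·c. Then for every ε ∈ (0, c), the crossing time satisfies T_α(ε, c) = ∫_ε^c (1/α(y)) dy > (1/σ)·ln(c/ε); equivalently, the windowed nominal rate satisfies σ_α(ε, c) < σ. -/
open intervalIntegral Real

/-- A strictly convex comparison respecting the endpoint cap `α(c) ≤ σ·c`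
certifies a windowed nominal rate strictly below `σ`. -/
theorem stmt_6 (α : ℝ → ℝ) (σ c : ℝ) (hσ : 0 < σ) (hc : 0 < c)
    (hcont : ContinuousOn α (Set.Icc 0 c))
    (hmono : StrictMonoOn α (Set.Icc 0 c))
    (h0 : α 0 = 0)
    (hvex : StrictConvexOn ℝ (Set.Icc 0 c) α)
    (hcap : α c ≤ σ * c) :
    ∀ ε ∈ Set.Ioo 0 c,
      (1 / σ) * Real.log (c / ε) < Tcross α ε c ∧
      sigmaNom α ε c < σ := by
  intro ε hε
  obtain ⟨hε0, hεc⟩ := hε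
  -- positivity of α on (0, c]
  have hαpos : ∀ x ∈ Set.Ioc (0:ℝ) c, 0 < α x := by
    intro x hx
    have := hmono (Set.left_mem_Icc.2 hc.le) ⟨hx.1.le, hx.2⟩ hx.1
    rwa [h0] at this
  -- strict bound α y < σ y on (0, c)
  have hkey : ∀ y ∈ Set.Ioo (0:ℝ) c, α y < σ * y := by
    intro y hy
    have ht0 : 0 < y / c := div_pos hy.1 hc
    have ht1 : y / c < 1 := (div_lt_one hc).2 hy.2
    have := hvex.2 (Set.right_mem_Icc.2 hc.le) (Set.left_mem_Icc.2 hc.le)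
      (by positivity : c ≠ 0) ht0 (by linarith : (0:ℝ) < 1 - y / c)
      (by ring)
    simp only [smul_eq_mul, h0, mul_zero, add_zero] at this
    have hy' : y / c * c = y := div_mul_cancel₀ y hc.ne'
    rw [hy'] at this
    calc α y < y / c * α c := this
      _ ≤ y / c * (σ * c) := by
          exact mul_le_mul_of_nonneg_left hcap ht0.le
      _ = σ * y := by field_simp
  -- the main integral inequality
  have hεpos : (0:ℝ) < ε := hε0
  have hmain : ∫ y in ε..c, 1 / (σ * y) < ∫ y in ε..c, 1 / α y := by
    apply integral_lt_integral_of_continuousOn_of_le_of_exists_lt hεc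
    · exact ContinuousOn.div continuousOn_const
        (continuousOn_const.mul continuousOn_id)
        (fun x hx => by have : 0 < x := lt_of_lt_of_le hε0 hx.1; positivity)
    · exact ContinuousOn.div continuousOn_const
        (hcont.mono (Set.Icc_subset_Icc hε0.le le_rfl))
        (fun x hx => (hαpos x ⟨lt_of_lt_of_le hε0 hx.1, hx.2⟩).ne')
    · intro x hx
      have hx0 : 0 < x := lt_trans hε0 hx.1
      have hαx : 0 < α x := hαpos x ⟨hx0, hx.2⟩
      have hle : α x ≤ σ * x := by
        rcases eq_or_lt_of_le hx.2 with h | h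
        · rw [h]; exact hcap
        · exact (hkey x ⟨hx0, h⟩).le
      exact one_div_le_one_div_of_le hαx hle
    · refine ⟨(ε + c) / 2, ⟨by linarith, by linarith⟩, ?_⟩
      have hm0 : 0 < (ε + c) / 2 := by linarith
      have hmc : (ε + c) / 2 < c := by linarith
      have hαm : 0 < α ((ε + c) / 2) := hαpos _ ⟨hm0, hmc.le⟩
      exact one_div_lt_one_div_of_lt hαm (hkey _ ⟨hm0, hmc⟩)
  have hcalc : ∫ y in ε..c, 1 / (σ * y) = (1 / σ) * Real.log (c / ε) := by
    have : ∀ y : ℝ, 1 / (σ * y) = (1 / σ) * (1 / y) := by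
      intro y; rw [one_div_mul_one_div]
    simp_rw [this]
    rw [intervalIntegral.integral_const_mul, integral_one_div]
    intro h
    rw [Set.uIcc_of_le hεc.le] at h
    exact absurd h.1 (not_le.2 hεpos)
  have h1 : (1 / σ) * Real.log (c / ε) < Tcross α ε c := by
    rw [Tcross, ← hcalc]; exact hmain
  refine ⟨h1, ?_⟩
  have hlog : 0 < Real.log (c / ε) := Real.log_pos ((one_lt_div hεpos).2 hεc)
  have hT : 0 < Tcross α ε c := lt_trans (by positivity) h1
  rw [sigmaNom, div_lt_iff₀ hT]
  calc Real.log (c / ε) = σ * ((1/σ) * Real.log (c/ε)) := by field_simp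
    _ < σ * Tcross α ε c := by exact mul_lt_mul_of_pos_left h1 hσ
end

section
/- Let σ > 0, c > 0, and let α : ℝ → ℝ be continuous on [0, c], strictly increasing on [0, c], satisfy α(0) = 0, and be strictly concave on [0, c]. Assume the relaxed endpoint condition α(c) < σ·c and assume there exists y⋆ ∈ (0, c) with α(y⋆) > σ·y⋆. Then there exists ε₀ ∈ (0, c) such that for every ε ∈ (0, ε₀), the crossing time satisfies T_α(ε, c) = ∫_ε^c (1/α(y)) dy < (1/σ)·ln(c/ε); equivalently, the windowed nominal rate satisfies σ_α(ε, c) > σ. -/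
open intervalIntegral Real

/-- Acceleration under a relaxed endpoint cap: a strictly concave comparison with
`α(c) < σ·c` that exceeds the linear baseline somewhere beats the baseline rate
on all sufficiently wide windows. -/
theorem stmt_7 (α : ℝ → ℝ) (σ c : ℝ) (hσ : 0 < σ) (hc : 0 < c)
    (hcont : ContinuousOn α (Set.Icc 0 c))
    (hmono : StrictMonoOn α (Set.Icc 0 c))
    (h0 : α 0 = 0)
    (hcave : StrictConcaveOn ℝ (Set.Icc 0 c) α)
    (hcap : α c < σ * c)
    (hstar : ∃ y ∈ Set.Ioo 0 c, σ * y < α y) :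
    ∃ ε₀ ∈ Set.Ioo 0 c, ∀ ε ∈ Set.Ioo 0 ε₀,
      Tcross α ε c < (1 / σ) * Real.log (c / ε) ∧
      σ < sigmaNom α ε c := by
  obtain ⟨y, ⟨hy0, hyc⟩, hyσ⟩ := hstar
  set k := α y / y with hk
  have hkσ : σ < k := (lt_div_iff₀ hy0).2 (by linarith)
  have hk0 : 0 < k := hσ.trans hkσ
  have hymem : y ∈ Set.Icc (0:ℝ) c := ⟨hy0.le, hyc.le⟩
  -- positivity of α on (0,c]
  have hαpos : ∀ x ∈ Set.Ioc (0:ℝ) c, 0 < α x := by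
    intro x hx
    have := hmono (Set.left_mem_Icc.2 hc.le) ⟨hx.1.le, hx.2⟩ hx.1
    rwa [h0] at this
  -- linear lower bound on [0, y]
  have hlin : ∀ x ∈ Set.Icc (0:ℝ) y, k * x ≤ α x := by
    intro x ⟨hx0, hxy⟩
    rcases eq_or_lt_of_le hx0 with h | h
    · simp [← h, h0]
    rcases eq_or_lt_of_le hxy with h' | h'
    · rw [h', hk]
      rw [div_mul_cancel₀]
      exact hy0.ne'
    · have hb : (0:ℝ) < x / y := div_pos h hy0
      have hb1 : x / y < 1 := (div_lt_one hy0).2 h'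
      have hcc := hcave.2 (Set.left_mem_Icc.2 hc.le) hymem hy0.ne
        (show (0:ℝ) < 1 - x / y by linarith) hb (by ring)
      simp only [smul_eq_mul, h0, mul_zero, zero_add] at hcc
      rw [div_mul_cancel₀ x hy0.ne'] at hcc
      have hkx : x / y * α y = k * x := by rw [hk]; field_simp
      linarith
  -- integrability pieces
  have hIcc1 : ∀ ε : ℝ, 0 < ε → ε ≤ y → IntervalIntegrable (fun t => 1 / α t) MeasureTheory.volume ε y := by
    intro ε hε hεy
    apply ContinuousOn.intervalIntegrable_of_Icc hεy
    apply ContinuousOn.div continuousOn_const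
    · exact hcont.mono (fun t ht => ⟨le_trans hε.le ht.1, le_trans ht.2 hyc.le⟩)
    · intro t ht
      exact (hαpos t ⟨lt_of_lt_of_le hε ht.1, le_trans ht.2 hyc.le⟩).ne'
  have hI2 : IntervalIntegrable (fun t => 1 / α t) MeasureTheory.volume y c := by
    apply ContinuousOn.intervalIntegrable_of_Icc hyc.le
    apply ContinuousOn.div continuousOn_const
    · exact hcont.mono (fun t ht => ⟨le_trans hy0.le ht.1, ht.2⟩)
    · intro t ht
      exact (hαpos t ⟨lt_of_lt_of_le hy0 ht.1, ht.2⟩).ne'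
  set C := ∫ t in y..c, 1 / α t with hC
  have hD : (0:ℝ) < 1 / σ - 1 / k := by
    have : 1 / k < 1 / σ := one_div_lt_one_div_of_lt hσ hkσ
    linarith
  set B := ((1 / σ) * Real.log c - (1 / k) * Real.log y - C) / (1 / σ - 1 / k) with hB
  refine ⟨min y (Real.exp B), ⟨lt_min hy0 (Real.exp_pos B), lt_of_le_of_lt (min_le_left _ _) hyc⟩, ?_⟩
  intro ε ⟨hε0, hεlt⟩
  have hεy : ε < y := lt_of_lt_of_le hεlt (min_le_left _ _)
  have hεc : ε < c := hεy.trans hyc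
  have hεB : Real.log ε < B := by
    have := Real.log_lt_log hε0 (lt_of_lt_of_le hεlt (min_le_right _ _))
    rwa [Real.log_exp] at this
  -- comparison on [ε, y]
  have hcomp : (∫ t in ε..y, 1 / α t) ≤ (1 / k) * (Real.log y - Real.log ε) := by
    have hlinInt : IntervalIntegrable (fun t => 1 / (k * t)) MeasureTheory.volume ε y := by
      apply ContinuousOn.intervalIntegrable_of_Icc hεy.le
      apply ContinuousOn.div continuousOn_const (continuousOn_const.mul continuousOn_id)
      intro t ht
      exact (mul_pos hk0 (lt_of_lt_of_le hε0 ht.1)).ne'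
    have hmono' : (∫ t in ε..y, 1 / α t) ≤ ∫ t in ε..y, 1 / (k * t) := by
      apply intervalIntegral.integral_mono_on hεy.le (hIcc1 ε hε0 hεy.le) hlinInt
      intro t ht
      have htpos : 0 < t := lt_of_lt_of_le hε0 ht.1
      have hkt : 0 < k * t := mul_pos hk0 htpos
      exact one_div_le_one_div_of_le hkt (hlin t ⟨htpos.le, ht.2⟩)
    have hval : (∫ t in ε..y, 1 / (k * t)) = (1 / k) * (Real.log y - Real.log ε) := by
      have : (∫ t in ε..y, 1 / (k * t)) = k⁻¹ * ∫ t in ε..y, 1 / t := by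
        rw [← intervalIntegral.integral_const_mul]
        congr 1; funext t
        rw [one_div, mul_inv, ← one_div t, mul_comm]
      rw [this, integral_one_div (Set.notMem_uIcc_of_lt hε0 hy0),
        Real.log_div hy0.ne' hε0.ne']
      rw [one_div]
    calc (∫ t in ε..y, 1 / α t) ≤ ∫ t in ε..y, 1 / (k * t) := hmono'
      _ = (1 / k) * (Real.log y - Real.log ε) := hval
  -- split Tcross
  have hsplit : Tcross α ε c = (∫ t in ε..y, 1 / α t) + C := by
    rw [Tcross, hC, intervalIntegral.integral_add_adjacent_intervals (hIcc1 ε hε0 hεy.le) hI2]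
  -- key inequality from the choice of ε
  have hkey : (1 / k) * (Real.log y - Real.log ε) + C < (1 / σ) * (Real.log c - Real.log ε) := by
    have := (lt_div_iff₀ hD).1 hεB
    nlinarith
  have hlogsplit : Real.log (c / ε) = Real.log c - Real.log ε :=
    Real.log_div hc.ne' hε0.ne'
  have hT : Tcross α ε c < (1 / σ) * Real.log (c / ε) := by
    rw [hsplit, hlogsplit]
    linarith
  refine ⟨hT, ?_⟩
  have hTpos : 0 < Tcross α ε c := by
    rw [Tcross]
    apply intervalIntegral.intervalIntegral_pos_of_pos_on
    · apply ContinuousOn.intervalIntegrable_of_Icc hεc.le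
      apply ContinuousOn.div continuousOn_const
        (hcont.mono (fun t ht => ⟨le_trans hε0.le ht.1, ht.2⟩))
      intro t ht
      exact (hαpos t ⟨lt_of_lt_of_le hε0 ht.1, ht.2⟩).ne'
    · intro t ht
      exact one_div_pos.2 (hαpos t ⟨hε0.trans ht.1, ht.2.le⟩)
    · exact hεc
  rw [sigmaNom, lt_div_iff₀ hTpos]
  have := mul_lt_mul_of_pos_left hT hσ
  have hss : σ * ((1 / σ) * Real.log (c / ε)) = Real.log (c / ε) := by
    field_simp
  rw [hss] at this
  linarith
end

section
/- Let c > 0 and let α : ℝ → ℝ be continuous on [0, c], twice continuously differentiable on (0, c), satisfy α(0) = 0, and be strictly increasing on [0, c] (so α(y) > 0 for y ∈ (0, c]). Suppose there exists ε ∈ (0, c) such that ∫_ε^c (1/α(y)) dy < (c/α(c))·ln(c/ε) (i.e., the endpoint-relaxation ratio r_α(ε, c) < 1). Then there exist 0 < a < b < c such that α''(y) < 0 for all y ∈ (a, b); in particular, α is strictly concave on a nontrivial subinterval of (0, c). -/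
open intervalIntegral Real

/-!
If `α'' ≥ 0` on `(0, c)` then `α` is convex on `[0, c]`, so with `α 0 = 0` it lies below its
chord, `α y ≤ (y / c) α c`. Integrating `1 / α y ≥ (c / α c) / y` over `[ε, c]` gives
`Tcross α ε c ≥ (c / α c) log (c / ε)`, contradicting the relaxation hypothesis. Hence
`α'' (y₀) < 0` at some `y₀ ∈ (0, c)`, and by continuity of `α''` on a whole interval around `y₀`.
-/

open Set

theorem ConvexOn.le_div_mul_of_map_zero {f : ℝ → ℝ} {c y : ℝ} (hc : 0 < c)
    (hf : ConvexOn ℝ (Icc 0 c) f) (h0 : f 0 = 0) (hy : y ∈ Icc 0 c) :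
    f y ≤ y / c * f c := by
  have ht : y / c ≤ 1 := (div_le_one hc).2 hy.2
  have hseg : y / c * c = y := div_mul_cancel₀ y hc.ne'
  simpa only [h0, smul_eq_mul, mul_zero, zero_add, hseg] using hf.2 (left_mem_Icc.2 hc.le) (right_mem_Icc.2 hc.le)
    (sub_nonneg.2 ht) (div_nonneg hy.1 hc.le) (by ring)

theorem log_div_le_Tcross_of_convexOn {α : ℝ → ℝ} {ε c : ℝ} (hε : ε ∈ Ioo 0 c)
    (hconv : ConvexOn ℝ (Icc 0 c) α) (hcont : ContinuousOn α (Icc ε c)) (h0 : α 0 = 0)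
    (hpos : ∀ y ∈ Icc ε c, 0 < α y) :
    c / α c * log (c / ε) ≤ Tcross α ε c := by
  have hc : 0 < c := hε.1.trans hε.2
  have hεc : ε ≤ c := hε.2.le
  have hαc : 0 < α c := hpos c (right_mem_Icc.2 hεc)
  have hpt : ∀ y ∈ Icc ε c, c / α c * (1 / y) ≤ 1 / α y := fun y hy => by
    have hy0 : 0 < y := hε.1.trans_le hy.1
    calc c / α c * (1 / y) = 1 / (y / c * α c) := by field_simp
      _ ≤ 1 / α y := one_div_le_one_div_of_le (hpos y hy)
          (hconv.le_div_mul_of_map_zero hc h0 ⟨hy0.le, hy.2⟩)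
  have hint_inv : IntervalIntegrable (fun y => c / α c * (1 / y)) MeasureTheory.volume ε c :=
    (intervalIntegral.intervalIntegrable_one_div
      (fun y hy => (hε.1.trans_le (uIcc_of_le hεc ▸ hy).1).ne') continuousOn_id).const_mul _
  have hint_α : IntervalIntegrable (fun y => 1 / α y) MeasureTheory.volume ε c :=
    intervalIntegral.intervalIntegrable_one_div
      (fun y hy => (hpos y (uIcc_of_le hεc ▸ hy)).ne') (uIcc_of_le hεc ▸ hcont)
  calc c / α c * log (c / ε) = ∫ y in ε..c, c / α c * (1 / y) := by
        rw [integral_const_mul, integral_one_div_of_pos hε.1 hc]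
    _ ≤ Tcross α ε c := integral_mono_on hεc hint_inv hint_α hpt

theorem exists_deriv_deriv_neg_of_lt_Tcross {α : ℝ → ℝ} {ε c : ℝ} (hε : ε ∈ Ioo 0 c)
    (hcont : ContinuousOn α (Icc 0 c)) (hC2 : ContDiffOn ℝ 2 α (Ioo 0 c)) (h0 : α 0 = 0)
    (hpos : ∀ y ∈ Icc ε c, 0 < α y) (hT : Tcross α ε c < c / α c * log (c / ε)) :
    ∃ y ∈ Ioo 0 c, deriv (deriv α) y < 0 := by
  by_contra! hnonneg
  have hconv : ConvexOn ℝ (Icc 0 c) α := by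
    refine convexOn_of_deriv2_nonneg (convex_Icc 0 c) hcont ?_ ?_ ?_ <;> rw [interior_Icc]
    · exact hC2.differentiableOn (by norm_num)
    · exact (hC2.deriv_of_isOpen (m := 1) isOpen_Ioo (by norm_num)).differentiableOn (by norm_num)
    · simpa only [Function.iterate_succ, Function.iterate_zero, Function.comp_apply,
        Function.id_comp] using hnonneg
  exact hT.not_ge <| log_div_le_Tcross_of_convexOn hε hconv
    (hcont.mono (Icc_subset_Icc hε.1.le le_rfl)) h0 hpos

theorem ContDiffOn.exists_Icc_deriv_deriv_neg {f : ℝ → ℝ} {U : Set ℝ} {y₀ : ℝ}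
    (hf : ContDiffOn ℝ 2 f U) (hU : IsOpen U) (hy₀ : y₀ ∈ U) (hneg : deriv (deriv f) y₀ < 0) :
    ∃ a b, a < b ∧ Icc a b ⊆ U ∧ ∀ y ∈ Ioo a b, deriv (deriv f) y < 0 := by
  have hcont : ContinuousAt (deriv (deriv f)) y₀ :=
    ((hf.deriv_of_isOpen hU (by norm_num)).continuousOn_deriv_of_isOpen hU le_rfl).continuousAt
      (hU.mem_nhds hy₀)
  obtain ⟨r, hr, hball⟩ := Metric.isOpen_iff.1 hU y₀ hy₀
  obtain ⟨s, hs, hneg_ball⟩ := Metric.mem_nhds_iff.1 (hcont.preimage_mem_nhds (Iio_mem_nhds hneg))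
  have hm : 0 < min r s := lt_min hr hs
  have hIcc : Icc (y₀ - min r s / 2) (y₀ + min r s / 2) ⊆ Metric.ball y₀ (min r s) := by
    rw [Real.ball_eq_Ioo]; exact Icc_subset_Ioo (by linarith) (by linarith)
  refine ⟨y₀ - min r s / 2, y₀ + min r s / 2, by linarith, ?_, fun y hy => ?_⟩
  · exact hIcc.trans ((Metric.ball_subset_ball (min_le_left r s)).trans hball)
  · exact hneg_ball (Metric.ball_subset_ball (min_le_right r s) (hIcc (Ioo_subset_Icc_self hy)))

theorem StrictMonoOn.pos_of_map_zero {α : ℝ → ℝ} {c y : ℝ} (hmono : StrictMonoOn α (Icc 0 c))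
    (h0 : α 0 = 0) (hy : y ∈ Ioc 0 c) : 0 < α y :=
  h0 ▸ hmono (left_mem_Icc.2 (hy.1.le.trans hy.2)) (Ioc_subset_Icc_self hy) hy.1

theorem stmt_8_general (α : ℝ → ℝ) (c : ℝ)
    (hcont : ContinuousOn α (Set.Icc 0 c))
    (hC2 : ContDiffOn ℝ 2 α (Set.Ioo 0 c))
    (h0 : α 0 = 0)
    (hmono : StrictMonoOn α (Set.Icc 0 c))
    (hrelax : ∃ ε ∈ Set.Ioo 0 c,
      Tcross α ε c < (c / α c) * Real.log (c / ε)) :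
    ∃ a b : ℝ, 0 < a ∧ a < b ∧ b < c ∧
      (∀ y ∈ Set.Ioo a b, deriv (deriv α) y < 0) ∧
      StrictConcaveOn ℝ (Set.Ioo a b) α := by
  obtain ⟨ε, hε, hT⟩ := hrelax
  have hpos : ∀ y ∈ Icc ε c, 0 < α y := fun y hy =>
    hmono.pos_of_map_zero h0 ⟨hε.1.trans_le hy.1, hy.2⟩
  obtain ⟨y₀, hy₀, hneg⟩ := exists_deriv_deriv_neg_of_lt_Tcross hε hcont hC2 h0 hpos hT
  obtain ⟨a, b, hab, hsub, hneg_ab⟩ := hC2.exists_Icc_deriv_deriv_neg isOpen_Ioo hy₀ hneg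
  refine ⟨a, b, (hsub (left_mem_Icc.2 hab.le)).1, hab, (hsub (right_mem_Icc.2 hab.le)).2,
    hneg_ab, ?_⟩
  refine strictConcaveOn_of_deriv2_neg' (convex_Ioo a b)
    (hC2.continuousOn.mono (Ioo_subset_Icc_self.trans hsub)) fun y hy => ?_
  simpa only [Function.iterate_succ, Function.iterate_zero, Function.comp_apply,
    Function.id_comp] using hneg_ab y hy

/-- Concavity is necessary for endpoint relaxation: if the endpoint-relaxation
ratio is `< 1` on some window, then `α'' < 0` on a nontrivial subinterval of
`(0, c)`; in particular `α` is strictly concave there. -/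
theorem stmt_8 (α : ℝ → ℝ) (c : ℝ) (hc : 0 < c)
    (hcont : ContinuousOn α (Set.Icc 0 c))
    (hC2 : ContDiffOn ℝ 2 α (Set.Ioo 0 c))
    (h0 : α 0 = 0)
    (hmono : StrictMonoOn α (Set.Icc 0 c))
    (hrelax : ∃ ε ∈ Set.Ioo 0 c,
      Tcross α ε c < (c / α c) * Real.log (c / ε)) :
    ∃ a b : ℝ, 0 < a ∧ a < b ∧ b < c ∧
      (∀ y ∈ Set.Ioo a b, deriv (deriv α) y < 0) ∧
      StrictConcaveOn ℝ (Set.Ioo a b) α :=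
  stmt_8_general α c hcont hC2 h0 hmono hrelax
end

section
/- Let E be a topological space, Ω ⊆ E a nonempty compact set, and a, b, g : E → ℝ continuous functions with a(x) ≥ 0 and g(x) > 0 for all x ∈ Ω, and such that for every x ∈ Ω with a(x) = 0 one has b(x) ≤ 0. For ξ ≥ 0 define θ(ξ) = sup_{x ∈ Ω} max{0, (ξ·a(x) + b(x))/g(x)}. Then for all 0 ≤ ξ₁ < ξ₂: (i) θ(ξ₁) ≤ θ(ξ₂); and (ii) if θ(ξ₁) > 0, then θ(ξ₁) < θ(ξ₂). -/
/-- Scaling law for the required actuation level: `θ(ξ)` is nondecreasing in `ξ`,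
and strictly increasing once it is positive. -/
theorem stmt_9 {E : Type*} [TopologicalSpace E] (Ω : Set E)
    (hΩne : Ω.Nonempty) (hΩcpt : IsCompact Ω)
    (a b g : E → ℝ) (ha : Continuous a) (hb : Continuous b) (hg : Continuous g)
    (hanneg : ∀ x ∈ Ω, 0 ≤ a x) (hgpos : ∀ x ∈ Ω, 0 < g x)
    (hzero : ∀ x ∈ Ω, a x = 0 → b x ≤ 0)
    (θ : ℝ → ℝ)
    (hθ : ∀ ξ : ℝ, θ ξ = sSup ((fun x => max 0 ((ξ * a x + b x) / g x)) '' Ω)) :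
    ∀ ξ₁ ξ₂ : ℝ, 0 ≤ ξ₁ → ξ₁ < ξ₂ →
      θ ξ₁ ≤ θ ξ₂ ∧ (0 < θ ξ₁ → θ ξ₁ < θ ξ₂) := by
  intro ξ₁ ξ₂ hξ₁ hlt
  set f : ℝ → E → ℝ := fun ξ x => max 0 ((ξ * a x + b x) / g x) with hf
  have hcont : ∀ ξ : ℝ, ContinuousOn (f ξ) Ω := by
    intro ξ
    exact ContinuousOn.sup continuousOn_const
      (ContinuousOn.div (by fun_prop) hg.continuousOn (fun x hx => (hgpos x hx).ne'))
  have hbdd : ∀ ξ : ℝ, BddAbove (f ξ '' Ω) := fun ξ =>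
    ((hΩcpt.image_of_continuousOn (hcont ξ)).isBounded).bddAbove
  have hne : ∀ ξ : ℝ, (f ξ '' Ω).Nonempty := fun ξ => hΩne.image _
  have hmono : ∀ x ∈ Ω, f ξ₁ x ≤ f ξ₂ x := by
    intro x hx
    apply max_le_max le_rfl
    have hgx := hgpos x hx
    gcongr
    nlinarith [hanneg x hx]
  have h1 : θ ξ₁ ≤ θ ξ₂ := by
    rw [hθ, hθ]
    apply csSup_le (hne ξ₁)
    rintro y ⟨x, hx, rfl⟩
    exact (hmono x hx).trans (le_csSup (hbdd ξ₂) ⟨x, hx, rfl⟩)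
  refine ⟨h1, fun hpos => ?_⟩
  obtain ⟨x₀, hx₀, hmax⟩ := hΩcpt.exists_isMaxOn hΩne (hcont ξ₁)
  have hθ1 : θ ξ₁ = f ξ₁ x₀ := by
    rw [hθ]
    apply le_antisymm
    · apply csSup_le (hne ξ₁)
      rintro y ⟨x, hx, rfl⟩
      exact hmax hx
    · exact le_csSup (hbdd ξ₁) ⟨x₀, hx₀, rfl⟩
  have hgp := hgpos x₀ hx₀
  have hfpos : 0 < (ξ₁ * a x₀ + b x₀) / g x₀ := by
    rw [hθ1] at hpos
    by_contra h
    push_neg at h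
    simp [hf, max_eq_left h] at hpos
  have hnum : 0 < ξ₁ * a x₀ + b x₀ := by
    have := mul_pos hfpos hgp
    rwa [div_mul_cancel₀ _ hgp.ne'] at this
  have hapos : 0 < a x₀ := by
    rcases lt_or_eq_of_le (hanneg x₀ hx₀) with h | h
    · exact h
    · exfalso; have := hzero x₀ hx₀ h.symm; nlinarith
  have hlt2 : (ξ₁ * a x₀ + b x₀) / g x₀ < (ξ₂ * a x₀ + b x₀) / g x₀ := by
    gcongr
  have : f ξ₁ x₀ < f ξ₂ x₀ := by
    rw [show f ξ₁ x₀ = (ξ₁ * a x₀ + b x₀) / g x₀ from max_eq_right hfpos.le]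
    exact lt_of_lt_of_le hlt2 (le_max_right _ _)
  calc θ ξ₁ = f ξ₁ x₀ := hθ1
    _ < f ξ₂ x₀ := this
    _ ≤ θ ξ₂ := by rw [hθ]; exact le_csSup (hbdd ξ₂) ⟨x₀, hx₀, rfl⟩
end

section
/- Let k₃ ≥ 0, k₄ > 0, c > 0, σ > k₃, and let α_d : ℝ → ℝ be continuous on [0, c], strictly increasing with α_d(0) = 0, and strictly convex on [0, c]. Suppose there exists ε ∈ (0, c) such that the windowed nominal rate satisfies σ_{α_d}(ε, c) > σ, i.e., ∫_ε^c (1/α_d(y)) dy < (1/σ)·ln(c/ε). Then α_d(c) > σ·c and the level-wise lower actuation bounds satisfy θ̲_min(α_d; c) > θ̲_min(α_l; c), where α_l(V) = σ·V; i.e., a strictly convex comparison achieving a faster windowed rate requires a strictly larger actuation bound than the linear baseline. -/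
open intervalIntegral Real

/-- Level-wise lower actuation bound for a comparison function `α` at level `c`. -/
noncomputable def thetaLB (α : ℝ → ℝ) (k₃ k₄ c : ℝ) : ℝ :=
  sSup ((fun V => max 0 ((α V - k₃ * V) / (k₄ * Real.sqrt V))) '' Set.Ioc 0 c)

/-- No actuation savings with convex shapes: a strictly convex comparison that
achieves a faster windowed nominal rate than the linear baseline `σ` must exceed
the linear endpoint and requires a strictly larger actuation bound. -/
theorem stmt_12 (k₃ k₄ c σ : ℝ) (hk₃ : 0 ≤ k₃) (hk₄ : 0 < k₄) (hc : 0 < c)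
    (hσ : k₃ < σ)
    (αd : ℝ → ℝ)
    (hcont : ContinuousOn αd (Set.Icc 0 c))
    (hmono : StrictMonoOn αd (Set.Icc 0 c))
    (h0 : αd 0 = 0)
    (hvex : StrictConvexOn ℝ (Set.Icc 0 c) αd)
    (hfast : ∃ ε ∈ Set.Ioo 0 c,
      Tcross αd ε c < (1 / σ) * Real.log (c / ε)) :
    σ * c < αd c ∧
    thetaLB (fun V => σ * V) k₃ k₄ c < thetaLB αd k₃ k₄ c := by
  have hσ0 : 0 < σ := lt_of_le_of_lt hk₃ hσ
  obtain ⟨ε, ⟨hε0, hεc⟩, hT⟩ := hfast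
  have hεc' : ε ≤ c := le_of_lt hεc
  -- First part: σ * c < αd c
  have h1 : σ * c < αd c := by
    by_contra h
    push_neg at h
    -- αd y ≤ σ y on [ε, c], αd y > 0
    have hsub : Set.Icc ε c ⊆ Set.Icc 0 c := Set.Icc_subset_Icc (le_of_lt hε0) le_rfl
    have hpos : ∀ y ∈ Set.Icc ε c, 0 < αd y := by
      intro y hy
      have hy0 : 0 < y := lt_of_lt_of_le hε0 hy.1
      have := hmono (Set.mem_Icc.2 ⟨le_rfl, le_of_lt hc⟩) (hsub hy) hy0
      rw [h0] at this; exact this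
    have hle : ∀ y ∈ Set.Icc ε c, αd y ≤ σ * y := by
      intro y hy
      have hy0 : 0 < y := lt_of_lt_of_le hε0 hy.1
      have ha : (0:ℝ) ≤ 1 - y / c := by
        have : y / c ≤ 1 := (div_le_one hc).2 hy.2
        linarith
      have hb : (0:ℝ) ≤ y / c := by positivity
      have hkey := hvex.convexOn.2 (Set.mem_Icc.2 ⟨le_rfl, le_of_lt hc⟩)
        (Set.mem_Icc.2 ⟨le_of_lt hc, le_rfl⟩) ha hb (by ring)
      simp only [smul_eq_mul, mul_zero, zero_add, h0] at hkey
      have hyc : y / c * c = y := div_mul_cancel₀ y (ne_of_gt hc)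
      rw [hyc] at hkey
      calc αd y ≤ y / c * αd c := by linarith
        _ ≤ y / c * (σ * c) := by
          apply mul_le_mul_of_nonneg_left h hb
        _ = σ * y := by field_simp
    -- integral comparison
    have hintαd : IntervalIntegrable (fun y => 1 / αd y) MeasureTheory.volume ε c := by
      apply ContinuousOn.intervalIntegrable
      rw [Set.uIcc_of_le hεc']
      exact ContinuousOn.div continuousOn_const (hcont.mono hsub)
        (fun y hy => ne_of_gt (hpos y hy))
    have hintlin : IntervalIntegrable (fun y => 1 / (σ * y)) MeasureTheory.volume ε c := by
      apply ContinuousOn.intervalIntegrable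
      rw [Set.uIcc_of_le hεc']
      exact ContinuousOn.div continuousOn_const (continuousOn_const.mul continuousOn_id)
        (fun y hy => ne_of_gt (mul_pos hσ0 (lt_of_lt_of_le hε0 hy.1)))
    have hmono_int : (∫ y in ε..c, 1 / (σ * y)) ≤ ∫ y in ε..c, 1 / αd y := by
      apply intervalIntegral.integral_mono_on hεc' hintlin hintαd
      intro y hy
      exact one_div_le_one_div_of_le (hpos y hy) (hle y hy)
    have hval : (∫ y in ε..c, 1 / (σ * y)) = (1 / σ) * Real.log (c / ε) := by
      have : ∀ y, 1 / (σ * y) = (1/σ) * (1 / y) := by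
        intro y; rw [one_div, mul_inv, ← one_div]; ring
      simp_rw [this]
      rw [intervalIntegral.integral_const_mul, integral_one_div]
      · intro h0mem
        rw [Set.uIcc_of_le hεc'] at h0mem
        exact absurd h0mem.1 (not_le.2 hε0)
    rw [Tcross] at hT
    rw [hval] at hmono_int
    linarith
  refine ⟨h1, ?_⟩
  -- Second part
  have hsc : 0 < Real.sqrt c := Real.sqrt_pos.2 hc
  set B : ℝ := (σ - k₃) * Real.sqrt c / k₄ with hB
  have hB0 : 0 ≤ B := div_nonneg (mul_nonneg (by linarith) hsc.le) hk₄.le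
  have hub : thetaLB (fun V => σ * V) k₃ k₄ c ≤ B := by
    apply Real.sSup_le
    · rintro x ⟨V, hV, rfl⟩
      obtain ⟨hV0, hVc⟩ := hV
      have hsV : 0 < Real.sqrt V := Real.sqrt_pos.2 hV0
      apply max_le
      · exact hB0
      · have : (σ * V - k₃ * V) / (k₄ * Real.sqrt V) = (σ - k₃) * Real.sqrt V / k₄ := by
          rw [div_eq_div_iff (by positivity) (ne_of_gt hk₄)]
          linear_combination (k₃ - σ) * k₄ * Real.mul_self_sqrt (le_of_lt hV0)
        rw [this, hB]
        gcongr <;> first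
          | linarith
          | exact Real.sqrt_le_sqrt hVc
    · exact hB0
  have hlt : B < max 0 ((αd c - k₃ * c) / (k₄ * Real.sqrt c)) := by
    apply lt_max_of_lt_right
    rw [hB, div_lt_div_iff₀ hk₄ (by positivity)]
    have hcc : Real.sqrt c * Real.sqrt c = c := Real.mul_self_sqrt (le_of_lt hc)
    have h2 : (σ - k₃) * Real.sqrt c * (k₄ * Real.sqrt c) = (σ - k₃) * k₄ * c := by
      linear_combination (σ - k₃) * k₄ * hcc
    rw [h2]
    nlinarith [mul_lt_mul_of_pos_right h1 hk₄]
  have hbdd : BddAbove ((fun V => max 0 ((αd V - k₃ * V) / (k₄ * Real.sqrt V))) '' Set.Ioc 0 c) := by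
    use max 0 ((αd c / c) * Real.sqrt c / k₄)
    rintro x ⟨V, ⟨hV0, hVc⟩, rfl⟩
    have hsV : 0 < Real.sqrt V := Real.sqrt_pos.2 hV0
    apply max_le (le_max_left _ _)
    apply le_max_of_le_right
    -- αd V ≤ (V/c) * αd c by convexity
    have ha : (0:ℝ) ≤ 1 - V / c := by
      have : V / c ≤ 1 := (div_le_one hc).2 hVc
      linarith
    have hb : (0:ℝ) ≤ V / c := by positivity
    have hkey := hvex.convexOn.2 (Set.mem_Icc.2 ⟨le_rfl, le_of_lt hc⟩)
      (Set.mem_Icc.2 ⟨le_of_lt hc, le_rfl⟩) ha hb (by ring)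
    simp only [smul_eq_mul, mul_zero, zero_add, h0] at hkey
    have hVc' : V / c * c = V := div_mul_cancel₀ V (ne_of_gt hc)
    rw [hVc'] at hkey
    have hnum : αd V - k₃ * V ≤ (αd c / c) * V := by
      have : V / c * αd c = (αd c / c) * V := by ring
      nlinarith [mul_nonneg hk₃ (le_of_lt hV0)]
    calc (αd V - k₃ * V) / (k₄ * Real.sqrt V)
        ≤ ((αd c / c) * V) / (k₄ * Real.sqrt V) := by
          apply div_le_div_of_nonneg_right hnum (by positivity) |>.trans_eq rfl
      _ = (αd c / c) * Real.sqrt V / k₄ := by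
          rw [div_eq_div_iff (by positivity) (ne_of_gt hk₄)]
          linear_combination (-(αd c / c)) * k₄ * Real.mul_self_sqrt (le_of_lt hV0)
      _ ≤ (αd c / c) * Real.sqrt c / k₄ := by
          have hαc : 0 ≤ αd c / c := by
            have : 0 < αd c := lt_trans (by positivity) h1
            positivity
          gcongr
  have hmem : max 0 ((αd c - k₃ * c) / (k₄ * Real.sqrt c)) ∈
      ((fun V => max 0 ((αd V - k₃ * V) / (k₄ * Real.sqrt V))) '' Set.Ioc 0 c) :=
    ⟨c, ⟨hc, le_rfl⟩, rfl⟩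
  have hge : max 0 ((αd c - k₃ * c) / (k₄ * Real.sqrt c)) ≤ thetaLB αd k₃ k₄ c :=
    le_csSup hbdd hmem
  calc thetaLB (fun V => σ * V) k₃ k₄ c ≤ B := hub
    _ < _ := hlt
    _ ≤ _ := hge
end

section
/- Let E = EuclideanSpace ℝ (Fin n), let X ⊆ E, let V : E → ℝ be differentiable, let f : E → E and g : Fin m → E → E, and let θ > 0, σ > 0, σ₀ > 0, c₀ > 0. Assume: (baseline) for every x ∈ X there exists u : Fin m → ℝ with |u i| ≤ θ for all i such that ⟪∇V(x), f(x)⟫ + ∑_i u i · ⟪∇V(x), g i (x)⟫ ≤ −σ·V(x); and (margin) for every x ∈ X with V(x) ≤ c₀ there exists such u with ⟪∇V(x), f(x)⟫ + ∑_i u i · ⟪∇V(x), g i (x)⟫ ≤ −(σ + σ₀)·V(x). Then there exists α : ℝ → ℝ that is continuous on [0, ∞), strictly increasing on [0, ∞), strictly concave on [0, ∞), with α(0) = 0, such that: (i) for every x ∈ X there exists u : Fin m → ℝ with |u i| ≤ θ for all i and ⟪∇V(x), f(x)⟫ + ∑_i u i · ⟪∇V(x), g i (x)⟫ ≤ −α(V(x));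 and (ii) for every c > 0 there exists ε₀ ∈ (0, min{c, c₀}) such that for all ε ∈ (0, ε₀), ln(c/ε)/∫_ε^c (1/α(y)) dy > σ. -/
/-!
Take `α y = A (1 - e^{-B y})` with `A = σ c₀` and `A B = σ + σ₀`. Since `α y ≤ A B y`, the margin
inequality makes `α` feasible on the sublevel set `{V ≤ c₀}`, and since `α < A ≤ σ V` off it, the
baseline makes `α` feasible there. As `α'(0) = σ + σ₀ > σ`, near `0` we have `α y ≥ s y` for some
`s > σ`, so `∫_ε^c 1/α ≤ ln(1/ε)/s + O(1)` while `ln(c/ε) = ln(1/ε) + O(1)`: the windowed rate tends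
to at least `s > σ` as `ε → 0⁺`.
-/

open Real Set Filter Topology MeasureTheory intervalIntegral
open scoped Interval

noncomputable def windowedRate (α : ℝ → ℝ) (ε c : ℝ) : ℝ :=
  log (c / ε) / ∫ y in ε..c, 1 / α y

noncomputable def saturatingExp (A B y : ℝ) : ℝ :=
  A * (1 - exp (-(B * y)))

section saturatingExp

variable {A B : ℝ}

@[simp]
lemma saturatingExp_zero : saturatingExp A B 0 = 0 := by
  simp [saturatingExp]

lemma continuous_saturatingExp : Continuous (saturatingExp A B) := by
  unfold saturatingExp
  fun_prop

lemma hasDerivAt_saturatingExp (y : ℝ) :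
    HasDerivAt (saturatingExp A B) (A * B * exp (-(B * y))) y := by
  have hlin : HasDerivAt (fun y => -(B * y)) (-(B * 1)) y :=
    ((hasDerivAt_id' y).const_mul B).neg
  exact (((hasDerivAt_const y 1).sub hlin.exp).const_mul A).congr_deriv (by ring)

lemma strictMono_saturatingExp (hA : 0 < A) (hB : 0 < B) : StrictMono (saturatingExp A B) :=
  fun x y hxy => by
    have : exp (-(B * y)) < exp (-(B * x)) := exp_lt_exp.2 (by nlinarith)
    exact mul_lt_mul_of_pos_left (by linarith) hA

lemma strictConcaveOn_saturatingExp (hA : 0 < A) (hB : 0 < B) :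
    StrictConcaveOn ℝ univ (saturatingExp A B) := by
  have hderiv : deriv (saturatingExp A B) = fun y => A * B * exp (-(B * y)) :=
    funext fun y => (hasDerivAt_saturatingExp y).deriv
  refine StrictAntiOn.strictConcaveOn_of_deriv convex_univ
    continuous_saturatingExp.continuousOn fun x _ y _ hxy => ?_
  rw [hderiv]
  have : exp (-(B * y)) < exp (-(B * x)) := exp_lt_exp.2 (by nlinarith)
  exact mul_lt_mul_of_pos_left this (mul_pos hA hB)

lemma saturatingExp_le (hA : 0 ≤ A) (y : ℝ) : saturatingExp A B y ≤ A * B * y := by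
  have := add_one_le_exp (-(B * y))
  unfold saturatingExp
  nlinarith

lemma saturatingExp_lt (hA : 0 < A) (y : ℝ) : saturatingExp A B y < A := by
  have := exp_pos (-(B * y))
  unfold saturatingExp
  nlinarith

end saturatingExp

lemma eventually_mul_lt_of_hasDerivAt {α : ℝ → ℝ} {d s : ℝ} (hd : HasDerivAt α d 0)
    (h0 : α 0 = 0) (hs : s < d) : ∀ᶠ y in 𝓝[>] 0, s * y < α y := by
  have hslope : Tendsto (slope α 0) (𝓝[>] 0) (𝓝 d) :=
    (hasDerivAt_iff_tendsto_slope.1 hd).mono_left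
      (nhdsWithin_mono _ fun y hy => ne_of_gt hy)
  filter_upwards [hslope.eventually_const_lt hs, self_mem_nhdsWithin] with y hy hpos
  rw [slope_def_field, h0, sub_zero, sub_zero, lt_div_iff₀ (hpos : (0 : ℝ) < y)] at hy
  exact hy

lemma exists_forall_Ioo_of_eventually_nhdsGT {p : ℝ → Prop} (hp : ∀ᶠ ε in 𝓝[>] 0, p ε)
    {b : ℝ} (hb : 0 < b) : ∃ ε₀, 0 < ε₀ ∧ ε₀ < b ∧ ∀ ε, 0 < ε → ε < ε₀ → p ε := by
  obtain ⟨u, hu, hsub⟩ := mem_nhdsGT_iff_exists_Ioo_subset.1 hp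
  refine ⟨min u (b / 2), lt_min hu (half_pos hb), (min_le_right _ _).trans_lt (half_lt_self hb),
    fun ε hε hεlt => hsub ⟨hε, hεlt.trans_le (min_le_left _ _)⟩⟩

lemma eventually_lt_windowedRate {α : ℝ → ℝ} {σ s c : ℝ} (hα : ContinuousOn α (Ioi 0))
    (hpos : ∀ y, 0 < y → 0 < α y) (hσ : 0 ≤ σ) (hσs : σ < s)
    (hlow : ∀ᶠ y in 𝓝[>] 0, s * y ≤ α y) (hc : 0 < c) :
    ∀ᶠ ε in 𝓝[>] 0, σ < windowedRate α ε c := by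
  obtain ⟨c₁, hc₁, hsub⟩ := mem_nhdsGT_iff_exists_Ioc_subset.1 hlow
  have hs : 0 < s := hσ.trans_lt hσs
  have hint : ∀ a b, 0 < a → 0 < b → IntervalIntegrable (fun y => 1 / α y) volume a b :=
    fun a b ha hb =>
      have hsub : [[a, b]] ⊆ Ioi 0 := fun y hy => (lt_min ha hb).trans_le hy.1
      intervalIntegrable_one_div (fun y hy => (hpos y (hsub hy)).ne') (hα.mono hsub)
  set C := ∫ y in c₁..c, 1 / α y
  set r := σ / s
  have hr : r < 1 := (div_lt_one hs).2 hσs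
  set T := -(σ * C + r * log c₁ - log c) / (1 - r)
  filter_upwards [tendsto_log_nhdsGT_zero.eventually_lt_atBot T,
    Ioo_mem_nhdsGT (lt_min hc hc₁)] with ε hlogε ⟨hε, hεlt⟩
  have hεc : ε < c := hεlt.trans_le (min_le_left _ _)
  have hεc₁ : ε < c₁ := hεlt.trans_le (min_le_right _ _)
  have hsplit : ∫ y in ε..c, 1 / α y = (∫ y in ε..c₁, 1 / α y) + C :=
    (integral_add_adjacent_intervals (hint ε c₁ hε hc₁) (hint c₁ c hc₁ hc)).symm
  have hnear : ∫ y in ε..c₁, 1 / α y ≤ s⁻¹ * (log c₁ - log ε) := by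
    have h0 : (0 : ℝ) ∉ [[ε, c₁]] := by
      rw [uIcc_of_le hεc₁.le]
      exact fun h => hε.not_ge h.1
    calc ∫ y in ε..c₁, 1 / α y ≤ ∫ y in ε..c₁, s⁻¹ * (1 / y) := by
          refine integral_mono_on hεc₁.le (hint ε c₁ hε hc₁)
            ((intervalIntegrable_one_div (fun y hy => ne_of_mem_of_not_mem hy h0)
              continuousOn_id).const_mul _) fun y hy => ?_
          have hy0 : 0 < y := hε.trans_le hy.1
          rw [← one_div, one_div_mul_one_div]
          exact one_div_le_one_div_of_le (mul_pos hs hy0) (hsub ⟨hy0, hy.2⟩)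
      _ = s⁻¹ * (log c₁ - log ε) := by
          rw [intervalIntegral.integral_const_mul, integral_one_div h0, log_div hc₁.ne' hε.ne']
  have hI : 0 < ∫ y in ε..c, 1 / α y :=
    intervalIntegral_pos_of_pos_on (hint ε c hε hc) (fun y hy => one_div_pos.2 (hpos y
      (hε.trans hy.1))) hεc
  have hT : (1 - r) * log ε < -(σ * C + r * log c₁ - log c) := by
    rw [← lt_div_iff₀' (sub_pos.2 hr)]
    exact hlogε
  have hσnear : σ * ∫ y in ε..c₁, 1 / α y ≤ r * (log c₁ - log ε) := by
    calc σ * ∫ y in ε..c₁, 1 / α y ≤ σ * (s⁻¹ * (log c₁ - log ε)) :=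
          mul_le_mul_of_nonneg_left hnear hσ
      _ = r * (log c₁ - log ε) := by simp only [r]; ring
  rw [windowedRate, lt_div_iff₀ hI, log_div hc.ne' hε.ne', hsplit]
  linarith

theorem stmt_13_general {n m : ℕ}
    (X : Set (EuclideanSpace ℝ (Fin n)))
    (V : EuclideanSpace ℝ (Fin n) → ℝ)
    (f : EuclideanSpace ℝ (Fin n) → EuclideanSpace ℝ (Fin n))
    (g : Fin m → EuclideanSpace ℝ (Fin n) → EuclideanSpace ℝ (Fin n))
    (θ σ σ₀ c₀ : ℝ) (hσ : 0 < σ) (hσ₀ : 0 < σ₀) (hc₀ : 0 < c₀)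
    (hbaseline : ∀ x ∈ X, ∃ u : Fin m → ℝ, (∀ i, |u i| ≤ θ) ∧
      (inner ℝ (gradient V x) (f x) : ℝ)
        + ∑ i, u i * (inner ℝ (gradient V x) (g i x) : ℝ) ≤ -(σ * V x))
    (hmargin : ∀ x ∈ X, V x ≤ c₀ → ∃ u : Fin m → ℝ, (∀ i, |u i| ≤ θ) ∧
      (inner ℝ (gradient V x) (f x) : ℝ)
        + ∑ i, u i * (inner ℝ (gradient V x) (g i x) : ℝ) ≤ -((σ + σ₀) * V x)) :
    ∃ α : ℝ → ℝ,
      ContinuousOn α (Set.Ici 0) ∧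
      StrictMonoOn α (Set.Ici 0) ∧
      StrictConcaveOn ℝ (Set.Ici 0) α ∧
      α 0 = 0 ∧
      (∀ x ∈ X, ∃ u : Fin m → ℝ, (∀ i, |u i| ≤ θ) ∧
        (inner ℝ (gradient V x) (f x) : ℝ)
          + ∑ i, u i * (inner ℝ (gradient V x) (g i x) : ℝ) ≤ -α (V x)) ∧
      (∀ c : ℝ, 0 < c → ∃ ε₀ : ℝ, 0 < ε₀ ∧ ε₀ < min c c₀ ∧
        ∀ ε : ℝ, 0 < ε → ε < ε₀ →
          σ < Real.log (c / ε) / ∫ y in ε..c, 1 / α y) := by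
  have hA : 0 < σ * c₀ := mul_pos hσ hc₀
  set A := σ * c₀
  set B := (σ + σ₀) / A
  have hAB : A * B = σ + σ₀ := mul_div_cancel₀ _ hA.ne'
  have hB : 0 < B := div_pos (by positivity) hA
  have hmono := strictMono_saturatingExp hA hB
  refine ⟨saturatingExp A B, continuous_saturatingExp.continuousOn, hmono.strictMonoOn _,
    (strictConcaveOn_saturatingExp hA hB).subset (subset_univ _) (convex_Ici 0),
    saturatingExp_zero, fun x hx => ?_, fun c hc => ?_⟩
  · by_cases hVx : V x ≤ c₀
    · obtain ⟨u, hu, hle⟩ := hmargin x hx hVx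
      have hαV := saturatingExp_le (B := B) hA.le (V x)
      rw [hAB] at hαV
      exact ⟨u, hu, by linarith⟩
    · obtain ⟨u, hu, hle⟩ := hbaseline x hx
      have hαA := saturatingExp_lt (B := B) hA (V x)
      have hAV : A ≤ σ * V x := mul_le_mul_of_nonneg_left (not_le.1 hVx).le hσ.le
      exact ⟨u, hu, by linarith⟩
  · obtain ⟨s, hσs, hs⟩ := exists_between (lt_add_of_pos_right σ hσ₀)
    have hlow : ∀ᶠ y in 𝓝[>] 0, s * y < saturatingExp A B y :=
      eventually_mul_lt_of_hasDerivAt (hasDerivAt_saturatingExp 0) saturatingExp_zero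
        (by simpa [hAB] using hs)
    exact exists_forall_Ioo_of_eventually_nhdsGT
      (eventually_lt_windowedRate continuous_saturatingExp.continuousOn
        (fun y hy => saturatingExp_zero (A := A) (B := B) ▸ hmono hy) hσ.le hσs
        (hlow.mono fun _ h => h.le) hc) (lt_min hc hc₀)

/-- Feasibility-preserving acceleration: from a feasible linear baseline with a
strict margin on a sublevel set, one can construct a strictly concave class-K
comparison function that remains feasible under the same input bound and strictly
improves the windowed nominal rate for all sufficiently wide windows. -/
theorem stmt_13 {n m : ℕ}
    (X : Set (EuclideanSpace ℝ (Fin n)))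
    (V : EuclideanSpace ℝ (Fin n) → ℝ) (hV : Differentiable ℝ V)
    (f : EuclideanSpace ℝ (Fin n) → EuclideanSpace ℝ (Fin n))
    (g : Fin m → EuclideanSpace ℝ (Fin n) → EuclideanSpace ℝ (Fin n))
    (θ σ σ₀ c₀ : ℝ) (hθ : 0 < θ) (hσ : 0 < σ) (hσ₀ : 0 < σ₀) (hc₀ : 0 < c₀)
    (hbaseline : ∀ x ∈ X, ∃ u : Fin m → ℝ, (∀ i, |u i| ≤ θ) ∧
      (inner ℝ (gradient V x) (f x) : ℝ)
        + ∑ i, u i * (inner ℝ (gradient V x) (g i x) : ℝ) ≤ -(σ * V x))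
    (hmargin : ∀ x ∈ X, V x ≤ c₀ → ∃ u : Fin m → ℝ, (∀ i, |u i| ≤ θ) ∧
      (inner ℝ (gradient V x) (f x) : ℝ)
        + ∑ i, u i * (inner ℝ (gradient V x) (g i x) : ℝ) ≤ -((σ + σ₀) * V x)) :
    ∃ α : ℝ → ℝ,
      ContinuousOn α (Set.Ici 0) ∧
      StrictMonoOn α (Set.Ici 0) ∧
      StrictConcaveOn ℝ (Set.Ici 0) α ∧
      α 0 = 0 ∧
      (∀ x ∈ X, ∃ u : Fin m → ℝ, (∀ i, |u i| ≤ θ) ∧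
        (inner ℝ (gradient V x) (f x) : ℝ)
          + ∑ i, u i * (inner ℝ (gradient V x) (g i x) : ℝ) ≤ -α (V x)) ∧
      (∀ c : ℝ, 0 < c → ∃ ε₀ : ℝ, 0 < ε₀ ∧ ε₀ < min c c₀ ∧
        ∀ ε : ℝ, 0 < ε → ε < ε₀ →
          σ < Real.log (c / ε) / ∫ y in ε..c, 1 / α y) :=
  stmt_13_general X V f g θ σ σ₀ c₀ hσ hσ₀ hc₀ hbaseline hmargin
end

section
/- Let 0 ≤ k_min < k_max, ℓ > 0, and σ > 0, and define F : ℝ → ℝ by F(v) = σ·v·(k_min·v + k_max·ℓ)/(v + ℓ). Then: (i) F(0) = 0; (ii) F is strictly increasing on [0, ∞); (iii) F is strictly concave on [0, ∞); and (iv) F is Lipschitz on [0, ∞) with constant σ·k_max, i.e., |F(v₁) − F(v₂)| ≤ σ·k_max·|v₁ − v₂| for all v₁, v₂ ≥ 0. -/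
/-- Key bound: for `0 ≤ a ≤ b`, `F b - F a ≤ σ·kmax·(b - a)`. -/
lemma stmt_15_aux (kmin kmax ℓ σ : ℝ)
    (hkmin : 0 ≤ kmin) (hk : kmin < kmax) (hℓ : 0 < ℓ) (hσ : 0 < σ)
    (a b : ℝ) (ha : 0 ≤ a) (hab : a ≤ b) :
    σ * b * (kmin * b + kmax * ℓ) / (b + ℓ)
      - σ * a * (kmin * a + kmax * ℓ) / (a + ℓ) ≤ σ * kmax * (b - a) := by
  have hda : (0:ℝ) < a + ℓ := by linarith
  have hdb : (0:ℝ) < b + ℓ := by linarith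
  rw [div_sub_div _ _ (ne_of_gt hdb) (ne_of_gt hda), div_le_iff₀ (by positivity)]
  have hb : 0 ≤ b := le_trans ha hab
  nlinarith [mul_nonneg (mul_nonneg (mul_nonneg hσ.le (sub_pos.mpr hk).le)
      (mul_nonneg ha hb)) (sub_nonneg.mpr hab),
    mul_nonneg (mul_nonneg (mul_nonneg hσ.le (sub_pos.mpr hk).le) hℓ.le)
      (mul_nonneg (by linarith : (0:ℝ) ≤ a + b) (sub_nonneg.mpr hab))]

/-- Monotone bound: for `0 ≤ a ≤ b`, `F a ≤ F b`. -/
lemma stmt_15_aux2 (kmin kmax ℓ σ : ℝ)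
    (hkmin : 0 ≤ kmin) (hk : kmin < kmax) (hℓ : 0 < ℓ) (hσ : 0 < σ)
    (a b : ℝ) (ha : 0 ≤ a) (hab : a ≤ b) :
    σ * a * (kmin * a + kmax * ℓ) / (a + ℓ)
      ≤ σ * b * (kmin * b + kmax * ℓ) / (b + ℓ) := by
  have hda : (0:ℝ) < a + ℓ := by linarith
  have hdb : (0:ℝ) < b + ℓ := by linarith
  have hb : 0 ≤ b := le_trans ha hab
  have hkmax : (0:ℝ) ≤ kmax := le_of_lt (lt_of_le_of_lt hkmin hk)
  rw [div_le_div_iff₀ hda hdb]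
  nlinarith [mul_nonneg (mul_nonneg hσ.le (mul_nonneg hkmin (mul_nonneg ha hb)))
      (sub_nonneg.mpr hab),
    mul_nonneg (mul_nonneg hσ.le (mul_nonneg hkmin hℓ.le))
      (mul_nonneg (by linarith : (0:ℝ) ≤ a + b) (sub_nonneg.mpr hab)),
    mul_nonneg (mul_nonneg hσ.le (mul_nonneg hkmax (mul_nonneg hℓ.le hℓ.le)))
      (sub_nonneg.mpr hab)]

/-- Concavification via a rational factor: `F(v) = σ·v·(k_min·v + k_max·ℓ)/(v + ℓ)`
vanishes at zero, is strictly increasing, strictly concave, and Lipschitz with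
constant `σ·k_max` on `[0, ∞)`. -/
theorem stmt_15 (kmin kmax ℓ σ : ℝ)
    (hkmin : 0 ≤ kmin) (hk : kmin < kmax) (hℓ : 0 < ℓ) (hσ : 0 < σ) :
    (fun v : ℝ => σ * v * (kmin * v + kmax * ℓ) / (v + ℓ)) 0 = 0 ∧
    StrictMonoOn (fun v : ℝ => σ * v * (kmin * v + kmax * ℓ) / (v + ℓ))
      (Set.Ici 0) ∧
    StrictConcaveOn ℝ (Set.Ici (0 : ℝ))
      (fun v : ℝ => σ * v * (kmin * v + kmax * ℓ) / (v + ℓ)) ∧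
    (∀ v₁ v₂ : ℝ, 0 ≤ v₁ → 0 ≤ v₂ →
      |σ * v₁ * (kmin * v₁ + kmax * ℓ) / (v₁ + ℓ)
        - σ * v₂ * (kmin * v₂ + kmax * ℓ) / (v₂ + ℓ)|
        ≤ σ * kmax * |v₁ - v₂|) := by
  have hkmax : (0:ℝ) < kmax := lt_of_le_of_lt hkmin hk
  refine ⟨by simp, ?_, ?_, ?_⟩
  · -- strict mono
    intro a ha b hb hab
    simp only [Set.mem_Ici] at ha hb
    have hda : (0:ℝ) < a + ℓ := by linarith
    have hdb : (0:ℝ) < b + ℓ := by linarith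
    simp only
    rw [div_lt_div_iff₀ hda hdb]
    nlinarith [mul_pos hσ (sub_pos.mpr hab), mul_pos hσ hℓ,
      mul_nonneg (mul_nonneg hσ.le hkmin) (mul_nonneg ha (le_of_lt (sub_pos.mpr hab))),
      mul_nonneg (mul_nonneg hσ.le (mul_nonneg hkmin hℓ.le))
        (mul_nonneg (by linarith : (0:ℝ) ≤ a + b) (le_of_lt (sub_pos.mpr hab))),
      mul_pos (mul_pos (mul_pos hσ hkmax) (mul_pos hℓ hℓ)) (sub_pos.mpr hab)]
  · -- strict concave
    refine ⟨convex_Ici 0, ?_⟩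
    intro x hx y hy hxy t s ht hs hts
    simp only [Set.mem_Ici] at hx hy
    simp only [smul_eq_mul]
    have hdx : (0:ℝ) < x + ℓ := by linarith
    have hdy : (0:ℝ) < y + ℓ := by linarith
    have hdz : (0:ℝ) < t * x + s * y + ℓ := by nlinarith
    have hs' : s = 1 - t := by linarith
    subst hs'
    have key : σ * (t * x + (1 - t) * y) * (kmin * (t * x + (1 - t) * y) + kmax * ℓ)
          / (t * x + (1 - t) * y + ℓ)
        - (t * (σ * x * (kmin * x + kmax * ℓ) / (x + ℓ))
            + (1 - t) * (σ * y * (kmin * y + kmax * ℓ) / (y + ℓ)))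
        = σ * (kmax - kmin) * ℓ ^ 2 * (t * (1 - t) * (x - y) ^ 2)
          / ((x + ℓ) * (y + ℓ) * (t * x + (1 - t) * y + ℓ)) := by
      field_simp
      ring
    have hpos : 0 < σ * (kmax - kmin) * ℓ ^ 2 * (t * (1 - t) * (x - y) ^ 2)
          / ((x + ℓ) * (y + ℓ) * (t * x + (1 - t) * y + ℓ)) := by
      have h0 : x - y ≠ 0 := sub_ne_zero.mpr hxy
      have hxy2 : (0:ℝ) < (x - y) ^ 2 := by positivity
      have hkk : (0:ℝ) < kmax - kmin := sub_pos.mpr hk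
      have h1t : (0:ℝ) < 1 - t := hs
      exact div_pos (mul_pos (mul_pos (mul_pos hσ hkk) (by positivity))
        (mul_pos (mul_pos ht h1t) hxy2)) (mul_pos (mul_pos hdx hdy) hdz)
    linarith [key, hpos]
  · -- Lipschitz
    intro v₁ v₂ h1 h2
    rcases le_total v₂ v₁ with h | h
    · rw [abs_of_nonneg (by linarith : (0:ℝ) ≤ v₁ - v₂), abs_le]
      have hub := stmt_15_aux kmin kmax ℓ σ hkmin hk hℓ hσ v₂ v₁ h2 h
      have hlb := stmt_15_aux2 kmin kmax ℓ σ hkmin hk hℓ hσ v₂ v₁ h2 h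
      have hnn : 0 ≤ σ * kmax * (v₁ - v₂) := by
        have := sub_nonneg.mpr h; positivity
      exact ⟨by linarith, by linarith⟩
    · rw [abs_of_nonpos (by linarith : v₁ - v₂ ≤ 0), abs_le]
      have hub := stmt_15_aux kmin kmax ℓ σ hkmin hk hℓ hσ v₁ v₂ h1 h
      have hlb := stmt_15_aux2 kmin kmax ℓ σ hkmin hk hℓ hσ v₁ v₂ h1 h
      have hnn : 0 ≤ σ * kmax * (v₂ - v₁) := by
        have := sub_nonneg.mpr h; positivity
      constructor <;> [linarith; nlinarith]
end

section
/- Let 0 ≤ k_min < k_max, ℓ > 0, and p ∈ (0, 1), and define G : ℝ → ℝ by G(v) = v·(k_min·v^p + k_max·ℓ)/(v^p + ℓ). Then G is strictly increasing and strictly concave on (0, ∞). -/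
/-!
Writing `c = k_max - k_min` and `u = v ^ p`, one has `G(v) = k_min v + c ℓ v / (u + ℓ)`, whose
derivative is `G'(v) = k_min + c ℓ ψ(u)` with `ψ(u) = ((1 - p) u + ℓ) / (u + ℓ) ^ 2`. For `p ≤ 1`
this is positive, so `G` is strictly increasing; `ψ` is strictly decreasing on `[0, ∞)` and
`v ↦ v ^ p` strictly increasing for `p > 0`, so `G'` is strictly decreasing and `G` is strictly
concave.
-/

open Real Set

variable {p ℓ : ℝ}

theorem strictAntiOn_affine_div_sq (hp₀ : -1 < p) (hp₁ : p ≤ 1) (hℓ : 0 < ℓ) :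
    StrictAntiOn (fun u : ℝ => ((1 - p) * u + ℓ) / (u + ℓ) ^ 2) (Ici 0) := by
  intro u (hu : 0 ≤ u) w (hw : 0 ≤ w) huw
  rw [div_lt_div_iff₀ (by positivity) (by positivity)]
  have hcross : ((1 - p) * u + ℓ) * (w + ℓ) ^ 2 - ((1 - p) * w + ℓ) * (u + ℓ) ^ 2
      = (w - u) * ((1 - p) * (u * w) + ℓ * (u + w) + (1 + p) * ℓ ^ 2) := by ring
  have hfactor : 0 < (1 - p) * (u * w) + ℓ * (u + w) + (1 + p) * ℓ ^ 2 := by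
    have := mul_nonneg (sub_nonneg.2 hp₁) (mul_nonneg hu hw)
    have := mul_pos (neg_lt_iff_pos_add'.1 hp₀) (pow_pos hℓ 2)
    nlinarith
  linarith [mul_pos (sub_pos.2 huw) hfactor]

theorem hasDerivAt_mul_affine_rpow_div {kmin kmax v : ℝ} (hℓ : 0 ≤ ℓ) (hv : 0 < v) :
    HasDerivAt (fun v : ℝ => v * (kmin * v ^ p + kmax * ℓ) / (v ^ p + ℓ))
      (kmin + (kmax - kmin) * ℓ * (((1 - p) * v ^ p + ℓ) / (v ^ p + ℓ) ^ 2)) v := by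
  have hu : HasDerivAt (fun v : ℝ => v ^ p) (p * (v ^ p / v)) v := by
    rw [← rpow_sub_one hv.ne']
    exact hasDerivAt_rpow_const (Or.inl hv.ne')
  have hden : v ^ p + ℓ ≠ 0 := (add_pos_of_pos_of_nonneg (rpow_pos_of_pos hv p) hℓ).ne'
  refine (((hasDerivAt_id' v).mul ((hu.const_mul kmin).add_const _)).div
    (hu.add_const ℓ) hden).congr_deriv ?_
  simp only [Pi.mul_apply]
  field_simp
  ring

/-- Composition of the rational concave factor with a sublinear power:
`G(v) = v·(k_min·v^p + k_max·ℓ)/(v^p + ℓ)` is strictly increasing and strictly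
concave on `(0, ∞)` for `p ∈ (0, 1)`. -/
theorem stmt_16 (kmin kmax ℓ p : ℝ)
    (hkmin : 0 ≤ kmin) (hk : kmin < kmax) (hℓ : 0 < ℓ)
    (hp0 : 0 < p) (hp1 : p < 1) :
    StrictMonoOn
      (fun v : ℝ => v * (kmin * v ^ p + kmax * ℓ) / (v ^ p + ℓ)) (Set.Ioi 0) ∧
    StrictConcaveOn ℝ (Set.Ioi (0 : ℝ))
      (fun v : ℝ => v * (kmin * v ^ p + kmax * ℓ) / (v ^ p + ℓ)) := by
  set ψ : ℝ → ℝ := fun u => ((1 - p) * u + ℓ) / (u + ℓ) ^ 2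
  have hG (v : ℝ) (hv : v ∈ Ioi 0) := hasDerivAt_mul_affine_rpow_div (p := p) (kmin := kmin)
    (kmax := kmax) hℓ.le hv
  have hcont : ContinuousOn (fun v : ℝ => v * (kmin * v ^ p + kmax * ℓ) / (v ^ p + ℓ))
      (Ioi 0) := fun v hv => (hG v hv).continuousAt.continuousWithinAt
  have hcℓ : 0 < (kmax - kmin) * ℓ := mul_pos (sub_pos.2 hk) hℓ
  constructor
  · refine strictMonoOn_of_deriv_pos (convex_Ioi 0) hcont fun v hv => ?_
    rw [interior_Ioi] at hv
    have hψ : 0 < ψ (v ^ p) := by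
      have := mul_pos (sub_pos.2 hp1) (rpow_pos_of_pos hv p)
      exact div_pos (by linarith) (pow_pos (add_pos (rpow_pos_of_pos hv p) hℓ) 2)
    rw [(hG v hv).deriv]
    exact add_pos_of_nonneg_of_pos hkmin (mul_pos hcℓ hψ)
  · refine StrictAntiOn.strictConcaveOn_of_deriv (convex_Ioi 0) hcont ?_
    rw [interior_Ioi]
    intro v (hv : 0 < v) w (hw : 0 < w) hvw
    rw [(hG v hv).deriv, (hG w hw).deriv]
    have hψ : ψ (w ^ p) < ψ (v ^ p) :=
      strictAntiOn_affine_div_sq (by linarith) hp1.le hℓ (rpow_nonneg hv.le p)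
        (rpow_nonneg hw.le p) (rpow_lt_rpow hv.le hvw hp0)
    exact add_lt_add_right (mul_lt_mul_of_pos_left hψ hcℓ) kmin
end
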